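/- Under the ANM setup, for every j ∈ V and every x ∈ ℝ^D, the Hessian diagonal of the full log-density admits the explicit decomposition 𝒟_j(x) = (log p_j)''(x_j − f_j(x)) − ∑_{i ∈ V : j ∈ Pa(i)} [ (∂²_{x_j x_j} f_i(x)) · (log p_i)'(x_i − f_i(x)) − (∂_{x_j} f_i(x))² · (log p_i)''(x_i − f_i(x)) ]. -/

import Mathlib

/-!
Restricted to the line `t ↦ update x j t`, the log-density is the finite sum of the terms
`log pᵢ(εᵢ)`, `εᵢ = xᵢ - fᵢ(x)`, each of class `C²`, so `𝒟_j` is the sum of their second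
derivatives in `t`. The term `i = j` is `log p_j(t - f_j(x))`, since `f_j` does not depend on
`x_j`; a term with `j ∉ Pa(i)` is constant; and for a child `i` of `j` the chain rule applied
twice to `log pᵢ(xᵢ - fᵢ(update x j t))` gives the bracket of the formula.
-/

open Real Function

section Calculus

lemma deriv_deriv_comp_sub_const (L : ℝ → ℝ) (c t : ℝ) :
    deriv (deriv fun s => L (s - c)) t = deriv (deriv L) (t - c) := by
  have h : deriv (fun s => L (s - c)) = fun s => deriv L (s - c) :=
    funext fun s => deriv_comp_sub_const ..
  rw [h, deriv_comp_sub_const]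

lemma deriv_comp_const_sub_comp {L φ : ℝ → ℝ} (hL : Differentiable ℝ L)
    (hφ : Differentiable ℝ φ) (c : ℝ) :
    deriv (fun s => L (c - φ s)) = fun s => -(deriv φ s * deriv L (c - φ s)) := by
  funext s
  have h := (hL (c - φ s)).hasDerivAt.comp s ((hφ s).hasDerivAt.const_sub c)
  exact h.deriv.trans (by ring)

lemma deriv_deriv_comp_const_sub_comp {L φ : ℝ → ℝ} (hL : ContDiff ℝ 2 L)
    (hφ : ContDiff ℝ 2 φ) (c t : ℝ) :
    deriv (deriv fun s => L (c - φ s)) t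
      = deriv φ t ^ 2 * deriv (deriv L) (c - φ t) - deriv (deriv φ) t * deriv L (c - φ t) := by
  rw [deriv_comp_const_sub_comp (hL.differentiable two_ne_zero)
    (hφ.differentiable two_ne_zero)]
  have hφ' := hφ.differentiable_deriv_two t
  have hL' := (hL.differentiable_deriv_two (c - φ t)).hasDerivAt.comp t
    ((hφ.differentiable two_ne_zero t).hasDerivAt.const_sub c)
  exact (hφ'.hasDerivAt.mul hL').neg.deriv.trans (by simp only [comp_apply]; ring)

lemma deriv_deriv_finset_sum {ι : Type*} {ψ : ι → ℝ → ℝ} {s : Finset ι}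
    (hψ : ∀ i ∈ s, ContDiff ℝ 2 (ψ i)) (t : ℝ) :
    deriv (deriv fun u => ∑ i ∈ s, ψ i u) t = ∑ i ∈ s, deriv (deriv (ψ i)) t := by
  have h : deriv (fun u => ∑ i ∈ s, ψ i u) = fun u => ∑ i ∈ s, deriv (ψ i) u :=
    funext fun u => deriv_fun_sum fun i hi =>
      ((hψ i hi).differentiable two_ne_zero).differentiableAt
  rw [h, deriv_fun_sum fun i hi => (hψ i hi).differentiable_deriv_two.differentiableAt]

end Calculus

section LogNoise

variable {ι : Type*} [DecidableEq ι] {p : ℝ → ℝ} {g : (ι → ℝ) → ℝ}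

lemma contDiff_log_noise_along_update [Fintype ι] (hp_pos : ∀ e, 0 < p e) (hp : ContDiff ℝ 2 p)
    (hg : ContDiff ℝ 2 g) (x : ι → ℝ) (i j : ι) :
    ContDiff ℝ 2 fun t => log (p (update x j t i - g (update x j t))) := by
  have hline := contDiff_update (𝕜 := ℝ) 2 x j
  exact (hp.log fun e => (hp_pos e).ne').comp
    (((contDiff_apply ℝ ℝ i).comp hline).sub (hg.comp hline))

lemma deriv_deriv_log_noise_along_update_self (p : ℝ → ℝ) (x : ι → ℝ) (j : ι)
    (hg : ∀ t, g (update x j t) = g x) :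
    deriv (deriv fun t => log (p (update x j t j - g (update x j t)))) (x j)
      = deriv (deriv fun e => log (p e)) (x j - g x) := by
  simp only [update_self, hg]
  exact deriv_deriv_comp_sub_const (fun e => log (p e)) (g x) (x j)

lemma deriv_deriv_log_noise_along_update_of_ne [Fintype ι] (hp_pos : ∀ e, 0 < p e)
    (hp : ContDiff ℝ 2 p) (hg : ContDiff ℝ 2 g) (x : ι → ℝ) {i j : ι} (hij : i ≠ j) :
    deriv (deriv fun t => log (p (update x j t i - g (update x j t)))) (x j)
      = deriv (fun t => g (update x j t)) (x j) ^ 2 * deriv (deriv fun e => log (p e)) (x i - g x)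
        - deriv (deriv fun t => g (update x j t)) (x j)
          * deriv (fun e => log (p e)) (x i - g x) := by
  simp only [update_of_ne hij]
  rw [deriv_deriv_comp_const_sub_comp (φ := fun t => g (update x j t))
    (hp.log fun e => (hp_pos e).ne') (hg.comp (contDiff_update 2 x j)), update_eq_self]

lemma deriv_deriv_log_noise_along_update_of_ne_of_const (p : ℝ → ℝ) (x : ι → ℝ) {i j : ι}
    (hij : i ≠ j) (hg : ∀ t, g (update x j t) = g x) :
    deriv (deriv fun t => log (p (update x j t i - g (update x j t)))) (x j) = 0 := by
  simp only [update_of_ne hij, hg, deriv_const']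

end LogNoise

/-- ANM Hessian diagonal decomposition:
    `𝒟_j(x) = (log p_j)''(x_j − f_j(x)) − ∑_{i : j ∈ Pa(i)}
    [∂²_{x_j x_j} f_i(x) · (log p_i)'(x_i − f_i(x))
      − (∂_{x_j} f_i(x))² · (log p_i)''(x_i − f_i(x))]`. -/
theorem anm_hessian_diagonal_decomposition
    (D : ℕ) (Pa : Fin D → Set (Fin D)) [∀ j i, Decidable (j ∈ Pa i)]
    (hPa : ∀ i, i ∉ Pa i)
    (p : Fin D → ℝ → ℝ)
    (hp_pos : ∀ i ε, 0 < p i ε)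
    (hp_smooth : ∀ i, ContDiff ℝ 2 (p i))
    (f : Fin D → (Fin D → ℝ) → ℝ)
    (hf_smooth : ∀ i, ContDiff ℝ 2 (f i))
    (hf_dep : ∀ i j, j ∉ Pa i → ∀ (x : Fin D → ℝ) (t : ℝ),
      f i (Function.update x j t) = f i x)
    (P : (Fin D → ℝ) → ℝ)
    (hP : ∀ x, P x = ∏ i, p i (x i - f i x))
    (S : Fin D → (Fin D → ℝ) → ℝ)
    (hS : ∀ j x, S j x = deriv (fun t => Real.log (P (Function.update x j t))) (x j))
    (Dg : Fin D → (Fin D → ℝ) → ℝ)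
    (hD : ∀ j x, Dg j x = deriv (fun t => S j (Function.update x j t)) (x j))
    (j : Fin D) (x : Fin D → ℝ) :
    Dg j x
      = deriv (deriv (fun e => Real.log (p j e))) (x j - f j x)
        - ∑ i ∈ Finset.univ.filter (fun i => j ∈ Pa i),
            (deriv (deriv (fun t => f i (Function.update x j t))) (x j)
                * deriv (fun e => Real.log (p i e)) (x i - f i x)
              - (deriv (fun t => f i (Function.update x j t)) (x j)) ^ 2
                * deriv (deriv (fun e => Real.log (p i e))) (x i - f i x)) := by
  have hlogP : (fun t => log (P (update x j t)))
      = fun t => ∑ i, log (p i (update x j t i - f i (update x j t))) :=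
    funext fun t => by rw [hP, log_prod fun i _ => (hp_pos _ _).ne']
  have hDg : Dg j x = deriv (deriv fun t => log (P (update x j t))) (x j) := by
    simp only [hD, hS, update_idem, update_self]
  rw [hDg, hlogP, deriv_deriv_finset_sum fun i _ =>
      contDiff_log_noise_along_update (hp_pos i) (hp_smooth i) (hf_smooth i) x i j,
    ← Finset.sum_filter_add_sum_filter_not Finset.univ (fun i => j ∈ Pa i),
    Finset.sum_eq_single_of_mem j (by simpa using hPa j) fun i hi hij =>
      deriv_deriv_log_noise_along_update_of_ne_of_const (p i) x hij
        (hf_dep i j (Finset.mem_filter.1 hi).2 x),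
    deriv_deriv_log_noise_along_update_self (p j) x j (hf_dep j j (hPa j) x),
    Finset.sum_congr rfl fun i hi =>
      deriv_deriv_log_noise_along_update_of_ne (hp_pos i) (hp_smooth i) (hf_smooth i) x
        (by rintro rfl; exact hPa _ (Finset.mem_filter.1 hi).2)]
  rw [add_comm, ← sub_neg_eq_add, ← Finset.sum_neg_distrib]
  simp only [neg_sub]
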